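/- arXiv:2211.06981 — 5 statements merged into one kernel-verified Lean document; each statement's English description precedes it below -/
import Mathlib

section
/- The map sending a Dyck path π of size n to the graph with vertex set [n] and edge set Area(π) is a bijection from the set of Dyck paths of size n to the set of indifference graphs on [n]. -/
/-- An indifference graph on `[n]`: for every edge `{i,l}` with `i < l`, every pair
`{j,k}` with `i ≤ j < k ≤ l` is also an edge. -/
def IsIndiff {n : ℕ} (G : SimpleGraph (Fin n)) : Prop :=
  ∀ i l : Fin n, i < l → G.Adj i l →
    ∀ j k : Fin n, i ≤ j → j < k → k ≤ l → G.Adj j k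

/-- A Dyck path of size `n`, encoded as a list of booleans (`true` = east step `E`,
`false` = south step `S`): it has `2n` steps, `n` east steps, and never goes below the
diagonal (every prefix has at least as many `E`'s as `S`'s). -/
def IsDyck (n : ℕ) (l : List Bool) : Prop :=
  l.length = 2 * n ∧ l.count true = n ∧
    ∀ m, (l.take m).count false ≤ (l.take m).count true

/-- The unit square labelled `{i,j}` (`1 ≤ i < j ≤ n`, one-based) lies below the path:
equivalently, the `j`-th east step occurs strictly before the `i`-th south step. -/
def dyckBelow (l : List Bool) (i j : ℕ) : Prop :=
  j ≤ (l.take (i + j - 1)).count true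

/-- The graph `Graph(π) = ([n], Area(π))` of a Dyck path. -/
def graphOf (n : ℕ) (l : List Bool) : SimpleGraph (Fin n) :=
  SimpleGraph.fromRel (fun i j => i < j ∧ dyckBelow l ((i : ℕ) + 1) ((j : ℕ) + 1))

/-!
Record a lattice path `l` by its height function `eastCount l m`, the number of east steps among
its first `m` steps: it starts at `0` and grows by `0` or `1` per step, and for a Dyck path of size
`n` it is at least `⌈m/2⌉` for `m ≤ 2n`. With vertices numbered from `0`, the square `{a, b}`
(`a < b`) lies below the path iff `b + 1 ≤ eastCount l (a + b + 1)`, so the monotonicity and unit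
steps of the height function give the indifference property. Conversely, on the antidiagonal
`a + b + 1 = m` the height of a Dyck path is the largest of `⌈m/2⌉` and the values `b + 1` over the
edges `{a, b}` of its graph lying there. For an indifference graph this formula is again a height
function, and its path has the given graph, so the two constructions are mutually inverse.
-/

def eastCount (l : List Bool) (m : ℕ) : ℕ :=
  (l.take m).count true

section eastCount

variable (l : List Bool)

lemma eastCount_le_self (m : ℕ) : eastCount l m ≤ m :=
  List.count_le_length.trans (List.length_take_le _ _)

lemma eastCount_mono {m m' : ℕ} (h : m ≤ m') : eastCount l m ≤ eastCount l m' := by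
  have h' : l.take m = (l.take m').take m := by rw [List.take_take, Nat.min_eq_left h]
  rw [eastCount, h']
  exact (List.take_sublist _ _).count_le _

lemma eastCount_le_add {m m' : ℕ} (h : m ≤ m') : eastCount l m' ≤ eastCount l m + (m' - m) := by
  obtain ⟨k, rfl⟩ := Nat.exists_eq_add_of_le h
  have hk : ((l.drop m).take k).count true ≤ k := eastCount_le_self _ k
  rw [eastCount, eastCount, List.take_add, List.count_append]
  omega

lemma eastCount_add_one (m : ℕ) :
    eastCount l (m + 1) = eastCount l m + l[m]?.toList.count true := by
  rw [eastCount, eastCount, List.take_add_one, List.count_append]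

end eastCount

def pathOfHeight (f : ℕ → ℕ) (N : ℕ) : List Bool :=
  (List.range N).map fun m => decide (f m < f (m + 1))

lemma pathOfHeight_congr {f g : ℕ → ℕ} {N : ℕ} (h : ∀ m ≤ N, f m = g m) :
    pathOfHeight f N = pathOfHeight g N := by
  refine List.map_congr_left fun m hm => ?_
  have hm : m < N := List.mem_range.mp hm
  rw [h m hm.le, h (m + 1) hm]

lemma pathOfHeight_eastCount (l : List Bool) : pathOfHeight (eastCount l) l.length = l := by
  refine List.ext_getElem (by simp [pathOfHeight]) fun m hm _ => ?_
  simp only [pathOfHeight, List.getElem_map, List.getElem_range, eastCount_add_one,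
    List.getElem?_eq_getElem (by simpa [pathOfHeight] using hm : m < l.length)]
  cases l[m] <;> simp

lemma eastCount_pathOfHeight {f : ℕ → ℕ} {N : ℕ} (h0 : f 0 = 0)
    (hstep : ∀ m < N, f m ≤ f (m + 1) ∧ f (m + 1) ≤ f m + 1) {m : ℕ} (hm : m ≤ N) :
    eastCount (pathOfHeight f N) m = f m := by
  induction m with
  | zero => simp [eastCount, h0]
  | succ m ih =>
    have hmN : m < N := hm
    have hget : (pathOfHeight f N)[m]? = some (decide (f m < f (m + 1))) := by
      simp [pathOfHeight, hmN]
    rw [eastCount_add_one, hget, ih hmN.le]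
    obtain ⟨hup, hlip⟩ := hstep m hmN
    by_cases hlt : f m < f (m + 1) <;> simp [hlt] <;> omega

section Dyck

variable {n : ℕ} {l : List Bool}

lemma IsDyck.eastCount_le (hl : IsDyck n l) (m : ℕ) : eastCount l m ≤ n :=
  hl.2.1 ▸ (List.take_sublist _ _).count_le _

lemma IsDyck.half_le_eastCount (hl : IsDyck n l) {m : ℕ} (hm : m ≤ 2 * n) :
    (m + 1) / 2 ≤ eastCount l m := by
  have hlen : (l.take m).length = m := by rw [List.length_take, hl.1]; omega
  have hsum := List.count_true_add_count_false (l.take m)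
  have := hl.2.2 m
  rw [eastCount]
  omega

end Dyck

lemma graphOf_adj_iff {n : ℕ} (l : List Bool) {a b : Fin n} (hab : a < b) :
    (graphOf n l).Adj a b ↔ (b : ℕ) + 1 ≤ eastCount l (a + b + 1) := by
  have harg : (a : ℕ) + 1 + ((b : ℕ) + 1) - 1 = a + b + 1 := by omega
  simp only [graphOf, SimpleGraph.fromRel_adj, dyckBelow, harg, eastCount]
  constructor
  · rintro ⟨-, ⟨-, hb⟩ | ⟨hba, -⟩⟩
    · exact hb
    · exact absurd hba hab.not_gt
  · exact fun hb => ⟨hab.ne, Or.inl ⟨hab, hb⟩⟩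

lemma isIndiff_graphOf (n : ℕ) (l : List Bool) : IsIndiff (graphOf n l) := by
  intro a b hab hadj j k hj hjk hk
  rw [graphOf_adj_iff l hab] at hadj
  rw [graphOf_adj_iff l hjk]
  have hj : (a : ℕ) ≤ j := hj
  have hk : (k : ℕ) ≤ b := hk
  rcases le_total ((j : ℕ) + k + 1) (a + b + 1) with h | h
  · have := eastCount_le_add l h
    omega
  · have := eastCount_mono l h
    omega

lemma SimpleGraph.ext_of_adj_of_lt {V : Type*} [LinearOrder V] {G H : SimpleGraph V}
    (h : ∀ a b, a < b → (G.Adj a b ↔ H.Adj a b)) : G = H := by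
  ext a b
  rcases lt_trichotomy a b with hab | rfl | hba
  · exact h a b hab
  · simp
  · rw [G.adj_comm, H.adj_comm]
    exact h b a hba

section pathHeight

variable {n : ℕ} (G : SimpleGraph (Fin n))

open Classical in
noncomputable def pathHeight (m : ℕ) : ℕ :=
  max ((m + 1) / 2)
    (({p : Fin n × Fin n | p.1 < p.2 ∧ G.Adj p.1 p.2 ∧ (p.1 : ℕ) + p.2 + 1 = m} : Finset _).sup
      fun p => (p.2 : ℕ) + 1)

lemma half_le_pathHeight (m : ℕ) : (m + 1) / 2 ≤ pathHeight G m :=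
  le_max_left _ _

lemma le_pathHeight_of_adj {a b : Fin n} (hab : a < b) (hadj : G.Adj a b) {m : ℕ}
    (hm : (a : ℕ) + b + 1 = m) : (b : ℕ) + 1 ≤ pathHeight G m := by
  classical
  refine le_trans ?_ (le_max_right _ _)
  exact Finset.le_sup (f := fun p : Fin n × Fin n => (p.2 : ℕ) + 1)
    (Finset.mem_filter.mpr ⟨Finset.mem_univ (a, b), hab, hadj, hm⟩)

lemma pathHeight_eq_half_or_exists_adj (m : ℕ) :
    pathHeight G m = (m + 1) / 2 ∨
      ∃ a b : Fin n, a < b ∧ G.Adj a b ∧ (a : ℕ) + b + 1 = m ∧ pathHeight G m = b + 1 := by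
  classical
  unfold pathHeight
  set s : Finset (Fin n × Fin n) :=
    {p | p.1 < p.2 ∧ G.Adj p.1 p.2 ∧ (p.1 : ℕ) + p.2 + 1 = m}
  rcases max_choice ((m + 1) / 2) (s.sup fun p => (p.2 : ℕ) + 1) with h | h
  · exact Or.inl h
  rcases s.eq_empty_or_nonempty with hempty | hne
  · rw [hempty, Finset.sup_empty, bot_eq_zero, max_eq_left (Nat.zero_le _)]
    exact Or.inl rfl
  · right
    obtain ⟨⟨a, b⟩, hp, hsup⟩ := s.exists_mem_eq_sup hne fun p => (p.2 : ℕ) + 1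
    obtain ⟨hab, hadj, hdiag⟩ := (Finset.mem_filter.mp hp).2
    exact ⟨a, b, hab, hadj, hdiag, h.trans hsup⟩

lemma pathHeight_zero : pathHeight G 0 = 0 := by
  rcases pathHeight_eq_half_or_exists_adj G 0 with h | ⟨a, b, -, -, hdiag, -⟩
  · exact h
  · omega

lemma pathHeight_le {m : ℕ} (hm : m ≤ 2 * n) : pathHeight G m ≤ n := by
  rcases pathHeight_eq_half_or_exists_adj G m with h | ⟨a, b, -, -, -, h⟩
  · omega
  · exact h ▸ b.isLt

lemma pathHeight_two_mul : pathHeight G (2 * n) = n :=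
  le_antisymm (pathHeight_le G le_rfl) (by have := half_le_pathHeight G (2 * n); omega)

variable {G}

lemma IsIndiff.adj_of_le_pathHeight (hG : IsIndiff G) {a b : Fin n} (hab : a < b)
    (h : (b : ℕ) + 1 ≤ pathHeight G (a + b + 1)) : G.Adj a b := by
  have hab' : (a : ℕ) < b := hab
  rcases pathHeight_eq_half_or_exists_adj G (a + b + 1) with h' | ⟨c, d, hcd, hadj, hdiag, h'⟩
  · omega
  · exact hG c d hcd hadj a b (Fin.le_def.mpr (by omega)) hab (Fin.le_def.mpr (by omega))

lemma IsIndiff.pathHeight_le_succ (hG : IsIndiff G) (m : ℕ) :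
    pathHeight G m ≤ pathHeight G (m + 1) := by
  have hhalf := half_le_pathHeight G (m + 1)
  rcases pathHeight_eq_half_or_exists_adj G m with h | ⟨a, b, hab, hadj, hdiag, h⟩
  · omega
  have hab' : (a : ℕ) < b := hab
  by_cases hgap : (a : ℕ) + 1 < b
  · -- the edge `{a, b}` yields the edge `{a + 1, b}` on the next antidiagonal
    have ha'b : (⟨a + 1, by omega⟩ : Fin n) < b := hgap
    have hadj' := hG a b hab hadj _ b (Fin.le_def.mpr (Nat.le_succ a)) ha'b le_rfl
    have : (b : ℕ) + 1 ≤ pathHeight G (m + 1) :=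
      le_pathHeight_of_adj G ha'b hadj' (show (a : ℕ) + 1 + b + 1 = m + 1 by omega)
    omega
  · omega

lemma IsIndiff.pathHeight_succ_le (hG : IsIndiff G) (m : ℕ) :
    pathHeight G (m + 1) ≤ pathHeight G m + 1 := by
  have hhalf := half_le_pathHeight G m
  rcases pathHeight_eq_half_or_exists_adj G (m + 1) with h | ⟨a, b, hab, hadj, hdiag, h⟩
  · omega
  have hab' : (a : ℕ) < b := hab
  by_cases hgap : (a : ℕ) + 1 < b
  · -- the edge `{a, b}` yields the edge `{a, b - 1}` on the previous antidiagonal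
    have hab'' : a < (⟨b - 1, by omega⟩ : Fin n) := Fin.lt_def.mpr (show (a : ℕ) < b - 1 by omega)
    have hadj' := hG a b hab hadj a _ le_rfl hab'' (Fin.le_def.mpr (Nat.sub_le b 1))
    have : (b : ℕ) - 1 + 1 ≤ pathHeight G m :=
      le_pathHeight_of_adj G hab'' hadj' (show (a : ℕ) + (b - 1) + 1 = m by omega)
    omega
  · omega

end pathHeight

noncomputable def pathOf {n : ℕ} (G : SimpleGraph (Fin n)) : List Bool :=
  pathOfHeight (pathHeight G) (2 * n)

section pathOf

variable {n : ℕ} {G : SimpleGraph (Fin n)}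

lemma IsIndiff.eastCount_pathOf (hG : IsIndiff G) {m : ℕ} (hm : m ≤ 2 * n) :
    eastCount (pathOf G) m = pathHeight G m :=
  eastCount_pathOfHeight (pathHeight_zero G)
    (fun m _ => ⟨hG.pathHeight_le_succ m, hG.pathHeight_succ_le m⟩) hm

lemma length_pathOf : (pathOf G).length = 2 * n := by
  simp [pathOf, pathOfHeight]

lemma IsIndiff.isDyck_pathOf (hG : IsIndiff G) : IsDyck n (pathOf G) := by
  have htotal : (pathOf G).count true = n := by
    have := hG.eastCount_pathOf le_rfl
    rwa [eastCount, List.take_of_length_le length_pathOf.le, pathHeight_two_mul] at this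
  refine ⟨length_pathOf, htotal, fun m => ?_⟩
  rw [List.take_eq_take_min, length_pathOf]
  have hm : min m (2 * n) ≤ 2 * n := min_le_right _ _
  have hcount := hG.eastCount_pathOf hm
  have hhalf := half_le_pathHeight G (min m (2 * n))
  have hsum := List.count_true_add_count_false ((pathOf G).take (min m (2 * n)))
  rw [List.length_take, length_pathOf] at hsum
  rw [eastCount] at hcount
  omega

lemma IsIndiff.graphOf_pathOf (hG : IsIndiff G) : graphOf n (pathOf G) = G := by
  refine SimpleGraph.ext_of_adj_of_lt fun a b hab => ?_
  have hm : (a : ℕ) + b + 1 ≤ 2 * n := by omega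
  rw [graphOf_adj_iff _ hab, hG.eastCount_pathOf hm]
  exact ⟨hG.adj_of_le_pathHeight hab, fun hadj => le_pathHeight_of_adj G hab hadj rfl⟩

end pathOf

lemma IsDyck.eastCount_eq_pathHeight {n : ℕ} {l : List Bool} (hl : IsDyck n l) {m : ℕ}
    (hm : m ≤ 2 * n) : eastCount l m = pathHeight (graphOf n l) m := by
  refine le_antisymm ?_ ?_
  · generalize hh : eastCount l m = h
    have hn : h ≤ n := hh ▸ hl.eastCount_le m
    have hhm : h ≤ m := hh ▸ eastCount_le_self l m
    by_cases hhalf : 2 * h ≤ m + 1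
    · exact (by omega : h ≤ (m + 1) / 2).trans (half_le_pathHeight _ m)
    -- otherwise the square `{m - h, h - 1}` lies below the path
    have hab : (⟨m - h, by omega⟩ : Fin n) < ⟨h - 1, by omega⟩ := Fin.mk_lt_mk.mpr (by omega)
    have hdiag : m - h + (h - 1) + 1 = m := by omega
    have hadj := (graphOf_adj_iff l hab).mpr
      (show h - 1 + 1 ≤ eastCount l (m - h + (h - 1) + 1) by rw [hdiag, hh]; omega)
    have : h - 1 + 1 ≤ pathHeight (graphOf n l) m := le_pathHeight_of_adj _ hab hadj hdiag
    omega
  · rcases pathHeight_eq_half_or_exists_adj (graphOf n l) m with h | ⟨a, b, hab, hadj, rfl, h⟩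
    · exact h ▸ hl.half_le_eastCount hm
    · exact h ▸ (graphOf_adj_iff l hab).mp hadj

lemma IsDyck.pathOf_graphOf {n : ℕ} {l : List Bool} (hl : IsDyck n l) :
    pathOf (graphOf n l) = l := by
  rw [pathOf, ← pathOfHeight_congr fun m hm => hl.eastCount_eq_pathHeight hm, ← hl.1,
    pathOfHeight_eastCount]

/-- The map `π ↦ Graph(π) = ([n], Area(π))` is a bijection from Dyck paths of size `n`
to indifference graphs on `[n]`. -/
theorem dyck_to_indifference_bijective (n : ℕ) :
    Set.BijOn (graphOf n) {l : List Bool | IsDyck n l}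
      {G : SimpleGraph (Fin n) | IsIndiff G} :=
  Set.InvOn.bijOn ⟨fun _ hl => IsDyck.pathOf_graphOf hl, fun _ hG => IsIndiff.graphOf_pathOf hG⟩
    (fun l _ => isIndiff_graphOf n l) (fun _ hG => IsIndiff.isDyck_pathOf hG)
end

section
/- For an indifference graph γ on [n], the set UT_γ = { g ∈ UT_n(𝔽_q) : g_{ij} = 0 for all {i,j} ∈ E(γ) } is a normal subgroup of UT_n(𝔽_q), the group of upper unitriangular n×n matrices over 𝔽_q. -/
/-- The unipotent upper triangular group `UT_n(F)`, as a subset of the invertible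
`n × n` matrices over `F`: diagonal entries `1`, entries below the diagonal `0`. -/
def UTset (n : ℕ) (F : Type*) [Field F] : Set (Matrix (Fin n) (Fin n) F)ˣ :=
  {g | (∀ i : Fin n, g.val i i = 1) ∧ ∀ i j : Fin n, j < i → g.val i j = 0}

/-- The normal pattern subgroup `UT_γ = {g ∈ UT_n : g_{ij} = 0 for {i,j} ∈ E(γ)}`
attached to a graph `γ` on `[n]`, as a subset. -/
def UTgSet (n : ℕ) (F : Type*) [Field F] (γ : SimpleGraph (Fin n)) :
    Set (Matrix (Fin n) (Fin n) F)ˣ :=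
  {g | g ∈ UTset n F ∧ ∀ i j : Fin n, γ.Adj i j → g.val i j = 0}

section Aux
variable {n : ℕ} {F : Type*} [Field F]

lemma ut_mul_lower {A B : Matrix (Fin n) (Fin n) F}
    (hA0 : ∀ i j, j < i → A i j = 0) (hB0 : ∀ i j, j < i → B i j = 0)
    {i j : Fin n} (hij : j < i) : (A * B) i j = 0 := by
  rw [Matrix.mul_apply]
  apply Finset.sum_eq_zero
  intro k _
  rcases lt_or_ge k i with h | h
  · rw [hA0 i k h, zero_mul]
  · rw [hB0 k j (lt_of_lt_of_le hij h), mul_zero]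

lemma ut_mul_diag {A B : Matrix (Fin n) (Fin n) F}
    (hA1 : ∀ i, A i i = 1) (hA0 : ∀ i j, j < i → A i j = 0)
    (hB1 : ∀ i, B i i = 1) (hB0 : ∀ i j, j < i → B i j = 0)
    (i : Fin n) : (A * B) i i = 1 := by
  rw [Matrix.mul_apply, Finset.sum_eq_single i]
  · rw [hA1, hB1, one_mul]
  · intro k _ hk
    rcases lt_or_gt_of_ne hk with h | h
    · rw [hA0 i k h, zero_mul]
    · rw [hB0 k i h, mul_zero]
  · intro h; exact absurd (Finset.mem_univ i) h

lemma ut_inv_lower (g : (Matrix (Fin n) (Fin n) F)ˣ) (hg : g ∈ UTset n F) :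
    ∀ i j : Fin n, j < i → g.inv i j = 0 := by
  obtain ⟨h1, h0⟩ := hg
  have key : ∀ m : ℕ, ∀ j i : Fin n, j.val = m → j < i → g.inv i j = 0 := by
    intro m
    induction m using Nat.strong_induction_on with
    | _ m ih =>
      intro j i hjm hji
      have h1' : (g.inv * g.val) i j = (1 : Matrix (Fin n) (Fin n) F) i j := by
        rw [g.inv_val]
      rw [Matrix.mul_apply, Finset.sum_eq_single j] at h1'
      · rw [h1 j, mul_one] at h1'
        rw [h1', Matrix.one_apply_ne (ne_of_gt hji)]
      · intro k _ hk
        rcases lt_or_gt_of_ne hk with h | h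
        · rw [ih k.val (hjm ▸ h) k i rfl (lt_trans h hji), zero_mul]
        · rw [h0 k j h, mul_zero]
      · intro h; exact absurd (Finset.mem_univ j) h
  intro i j hji
  exact key j.val j i rfl hji

lemma ut_inv_mem (g : (Matrix (Fin n) (Fin n) F)ˣ) (hg : g ∈ UTset n F) :
    g⁻¹ ∈ UTset n F := by
  obtain ⟨h1, h0⟩ := hg
  have hlow := ut_inv_lower g ⟨h1, h0⟩
  refine ⟨fun i => ?_, hlow⟩
  have h1' : (g.inv * g.val) i i = (1 : Matrix (Fin n) (Fin n) F) i i := by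
    rw [g.inv_val]
  rw [Matrix.mul_apply, Finset.sum_eq_single i] at h1'
  · rw [h1 i, mul_one] at h1'
    rw [show ((g⁻¹ : (Matrix (Fin n) (Fin n) F)ˣ) : Matrix (Fin n) (Fin n) F) i i = g.inv i i from rfl,
      h1', Matrix.one_apply_eq]
  · intro k _ hk
    rcases lt_or_gt_of_ne hk with h | h
    · rw [hlow i k h, zero_mul]
    · rw [h0 k i h, mul_zero]
  · intro h; exact absurd (Finset.mem_univ i) h

lemma ut_mul_mem {a b : (Matrix (Fin n) (Fin n) F)ˣ}
    (ha : a ∈ UTset n F) (hb : b ∈ UTset n F) : a * b ∈ UTset n F :=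
  ⟨fun i => by rw [Units.val_mul]; exact ut_mul_diag ha.1 ha.2 hb.1 hb.2 i,
   fun i j hji => by rw [Units.val_mul]; exact ut_mul_lower ha.2 hb.2 hji⟩

end Aux

section Aux2
variable {n : ℕ} {F : Type*} [Field F] {γ : SimpleGraph (Fin n)}

lemma utg_mul_edge (hγ : IsIndiff γ) {A B : Matrix (Fin n) (Fin n) F}
    (hA0 : ∀ i j, j < i → A i j = 0) (hB0 : ∀ i j, j < i → B i j = 0)
    (hAe : ∀ i j, γ.Adj i j → A i j = 0) (hBe : ∀ i j, γ.Adj i j → B i j = 0)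
    {i j : Fin n} (hadj : γ.Adj i j) : (A * B) i j = 0 := by
  rcases lt_trichotomy i j with hij | hij | hij
  · rw [Matrix.mul_apply]
    apply Finset.sum_eq_zero
    intro k _
    rcases lt_or_ge k i with h | h
    · rw [hA0 i k h, zero_mul]
    rcases lt_or_ge j k with h' | h'
    · rw [hB0 k j h', mul_zero]
    rcases eq_or_lt_of_le h with heq | h
    · rw [← heq, hBe i j hadj, mul_zero]
    rcases eq_or_lt_of_le h' with heq | h'
    · rw [heq, hAe i j hadj, zero_mul]
    · rw [hAe i k (hγ i j hij hadj i k le_rfl h (le_of_lt h')), zero_mul]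
  · exact absurd hadj (hij ▸ γ.irrefl)
  · exact ut_mul_lower hA0 hB0 hij

lemma utg_inv_edge (hγ : IsIndiff γ) (g : (Matrix (Fin n) (Fin n) F)ˣ)
    (hg : g ∈ UTset n F) (hge : ∀ i j, γ.Adj i j → g.val i j = 0)
    {i j : Fin n} (hadj : γ.Adj i j) : g.inv i j = 0 := by
  obtain ⟨h1, h0⟩ := hg
  have hlow := ut_inv_lower g ⟨h1, h0⟩
  rcases lt_trichotomy i j with hij | hij | hij
  · have h1' : (g.inv * g.val) i j = (1 : Matrix (Fin n) (Fin n) F) i j := by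
      rw [g.inv_val]
    rw [Matrix.mul_apply, Finset.sum_eq_single j] at h1'
    · rw [h1 j, mul_one] at h1'
      rw [h1', Matrix.one_apply_ne (ne_of_lt hij)]
    · intro k _ hk
      rcases lt_or_ge j k with h | h
      · rw [h0 k j h, mul_zero]
      have h' : k < j := lt_of_le_of_ne h hk
      rcases lt_trichotomy k i with hk' | hk' | hk'
      · rw [hlow i k hk', zero_mul]
      · subst hk'; rw [hge k j hadj, mul_zero]
      · rw [hge k j (hγ i j hij hadj k j (le_of_lt hk') h' le_rfl), mul_zero]
    · intro h; exact absurd (Finset.mem_univ j) h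
  · exact absurd hadj (hij ▸ γ.irrefl)
  · exact hlow i j hij

lemma utg_conj_edge (hγ : IsIndiff γ) (k h : (Matrix (Fin n) (Fin n) F)ˣ)
    (hk : k ∈ UTset n F) (hh : h ∈ UTgSet n F γ)
    {i j : Fin n} (hadj : γ.Adj i j) : (k * h * k⁻¹).val i j = 0 := by
  obtain ⟨hA1, hA0⟩ := hk
  obtain ⟨⟨hm1, hm0⟩, hme⟩ := hh
  obtain ⟨hB1, hB0⟩ := ut_inv_mem k ⟨hA1, hA0⟩
  have hAB : (k.val : Matrix (Fin n) (Fin n) F) * (k⁻¹).val = 1 := k.mul_inv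
  have hval : (k * h * k⁻¹).val
      = k.val * ((h.val - 1) * (k⁻¹).val) + 1 := by
    rw [Units.val_mul, Units.val_mul, sub_mul, one_mul, mul_sub, hAB,
      sub_add_cancel, mul_assoc]
  rw [hval]
  rcases lt_trichotomy i j with hij | hij | hij
  swap
  · exact absurd hadj (hij ▸ γ.irrefl)
  · rw [Matrix.add_apply, Matrix.one_apply_ne (ne_of_lt hij), add_zero,
      Matrix.mul_apply]
    apply Finset.sum_eq_zero
    intro p _
    rcases lt_or_ge p i with hp | hp
    · rw [hA0 i p hp, zero_mul]
    have : ((h.val - 1) * (k⁻¹).val) p j = 0 := by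
      rw [Matrix.mul_apply]
      apply Finset.sum_eq_zero
      intro l _
      rcases lt_or_ge j l with hl | hl
      · rw [hB0 l j hl, mul_zero]
      rcases lt_trichotomy l p with hlp | hlp | hlp
      · rw [Matrix.sub_apply, hm0 p l hlp, Matrix.one_apply_ne (ne_of_gt hlp),
          sub_zero, zero_mul]
      · subst hlp
        rw [Matrix.sub_apply, hm1 l, Matrix.one_apply_eq, sub_self, zero_mul]
      · rw [Matrix.sub_apply, hme p l (hγ i j hij hadj p l hp hlp hl),
          Matrix.one_apply_ne (ne_of_lt hlp), sub_zero, zero_mul]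
    rw [this, mul_zero]
  · -- j < i : strictly lower entry, everything triangular
    rw [Matrix.add_apply, Matrix.one_apply_ne (ne_of_gt hij), add_zero]
    apply ut_mul_lower hA0 _ hij
    intro a b hba
    rw [Matrix.mul_apply]
    apply Finset.sum_eq_zero
    intro l _
    rcases lt_or_ge l a with hla | hla
    · rw [Matrix.sub_apply, hm0 a l hla, Matrix.one_apply_ne (ne_of_gt hla),
        sub_zero, zero_mul]
    · rw [hB0 l b (lt_of_lt_of_le hba hla), mul_zero]

end Aux2


/-- For an indifference graph `γ` on `[n]`, `UT_γ` is a normal subgroup of `UT_n(𝔽_q)`: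
there are subgroups `K` (with underlying set `UT_n`) and `H` (with underlying set `UT_γ`)
of the group of invertible matrices such that `H ≤ K` and `H` is stable under
conjugation by elements of `K`. -/
theorem UTg_normal_in_UT (n : ℕ) (F : Type*) [Field F] [Fintype F]
    (γ : SimpleGraph (Fin n)) (hγ : IsIndiff γ) :
    ∃ K H : Subgroup (Matrix (Fin n) (Fin n) F)ˣ,
      (K : Set (Matrix (Fin n) (Fin n) F)ˣ) = UTset n F ∧
      (H : Set (Matrix (Fin n) (Fin n) F)ˣ) = UTgSet n F γ ∧
      H ≤ K ∧ ∀ k ∈ K, ∀ h ∈ H, k * h * k⁻¹ ∈ H := by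
  refine ⟨
    { carrier := UTset n F
      one_mem' := ⟨fun i => Matrix.one_apply_eq i,
        fun i j hji => Matrix.one_apply_ne (ne_of_gt hji)⟩
      mul_mem' := fun {a b} ha hb =>
        ⟨fun i => by rw [Units.val_mul]; exact ut_mul_diag ha.1 ha.2 hb.1 hb.2 i,
         fun i j hji => by rw [Units.val_mul]; exact ut_mul_lower ha.2 hb.2 hji⟩
      inv_mem' := fun {a} ha => ut_inv_mem a ha },
    { carrier := UTgSet n F γ
      one_mem' := ⟨⟨fun i => Matrix.one_apply_eq i,
          fun i j hji => Matrix.one_apply_ne (ne_of_gt hji)⟩,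
        fun i j hadj => Matrix.one_apply_ne (γ.ne_of_adj hadj)⟩
      mul_mem' := fun {a b} ha hb =>
        ⟨⟨fun i => by rw [Units.val_mul]; exact ut_mul_diag ha.1.1 ha.1.2 hb.1.1 hb.1.2 i,
          fun i j hji => by rw [Units.val_mul]; exact ut_mul_lower ha.1.2 hb.1.2 hji⟩,
         fun i j hadj => by
          rw [Units.val_mul]
          exact utg_mul_edge hγ ha.1.2 hb.1.2 ha.2 hb.2 hadj⟩
      inv_mem' := fun {a} ha =>
        ⟨ut_inv_mem a ha.1, fun i j hadj => utg_inv_edge hγ a ha.1 ha.2 hadj⟩ },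
    rfl, rfl, fun g hg => hg.1, ?_⟩
  intro k hk h hh
  refine ⟨?_, fun i j hadj => utg_conj_edge hγ k h hk hh hadj⟩
  exact ut_mul_mem (ut_mul_mem hk hh.1) (ut_inv_mem k hk)
end

section
/- Let γ be an indifference graph on [n] and let A ∈ Mat_n(𝔽_q) be such that 1+A ∈ GL_n(𝔽_q). Then the value of the induced character Ind_{UT_γ}^{GL_n(𝔽_q)}(1) at 1+A equals (q-1)^n q^{|E(γ)|} times the number of cosets gB_n(𝔽_q) with g^{-1}Ag ∈ ut_γ(𝔽_q). -/
/-- The ad-nilpotent ideal `ut_γ(F)`: strictly upper triangular matrices whose entries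
vanish at every edge of `γ`. -/
def utgSet (n : ℕ) (F : Type*) [Field F] (γ : SimpleGraph (Fin n)) :
    Set (Matrix (Fin n) (Fin n) F) :=
  {A | (∀ i j : Fin n, j ≤ i → A i j = 0) ∧ ∀ i j : Fin n, γ.Adj i j → A i j = 0}

section Aux

variable {n : ℕ} {F : Type*} [Field F]

lemma utg_conj {γ : SimpleGraph (Fin n)} (hγ : IsIndiff γ)
    {U V X : Matrix (Fin n) (Fin n) F}
    (hU : ∀ i j : Fin n, j < i → U i j = 0) (hV : ∀ i j : Fin n, j < i → V i j = 0)
    (hX : X ∈ utgSet n F γ) : U * X * V ∈ utgSet n F γ := by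
  obtain ⟨hX1, hX2⟩ := hX
  have key : ∀ i j : Fin n, (j ≤ i ∨ γ.Adj i j) → (U * X * V) i j = 0 := by
    intro i j hij
    rw [Matrix.mul_apply]
    refine Finset.sum_eq_zero fun l _ => ?_
    rw [Matrix.mul_apply, Finset.sum_mul]
    refine Finset.sum_eq_zero fun k _ => ?_
    by_cases hik : i ≤ k
    · by_cases hlj : l ≤ j
      · by_cases hkl : k < l
        · have hXkl : X k l = 0 := by
            rcases lt_trichotomy i j with hij' | hij' | hij'
            · rcases hij with hji | hadj
              · exact absurd hij' (not_lt.mpr hji)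
              · exact hX2 k l (hγ i j hij' hadj k l hik hkl hlj)
            · exact hX1 k l (hlj.trans ((le_of_eq hij'.symm).trans hik))
            · exact hX1 k l (hlj.trans ((le_of_lt hij').trans hik))
          simp [hXkl]
        · simp [hX1 k l (le_of_not_gt hkl)]
      · simp [hV l j (lt_of_not_ge hlj)]
    · simp [hU i k (lt_of_not_ge hik)]
  exact ⟨fun i j h => key i j (Or.inl h), fun i j h => key i j (Or.inr h)⟩

lemma mem_H_iff {γ : SimpleGraph (Fin n)} {A : Matrix (Fin n) (Fin n) F}
    (hA : IsUnit (1 + A)) {H : Subgroup (Matrix (Fin n) (Fin n) F)ˣ}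
    (hH : (H : Set (Matrix (Fin n) (Fin n) F)ˣ) = UTgSet n F γ)
    (g : (Matrix (Fin n) (Fin n) F)ˣ) :
    g⁻¹ * hA.unit * g ∈ H ↔ (g⁻¹).val * A * g.val ∈ utgSet n F γ := by
  have hval : ((g⁻¹ * hA.unit * g : (Matrix (Fin n) (Fin n) F)ˣ) : Matrix (Fin n) (Fin n) F)
      = 1 + (g⁻¹).val * A * g.val := by
    rw [Units.val_mul, Units.val_mul, hA.unit_spec, mul_add, mul_one, add_mul, Units.inv_mul]
  rw [← SetLike.mem_coe, hH]
  constructor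
  · rintro ⟨⟨h1, h2⟩, h3⟩
    constructor
    · intro i j hle
      rcases eq_or_lt_of_le hle with he | hlt
      · subst he
        have := h1 j
        rw [hval] at this
        simpa [Matrix.add_apply, Matrix.one_apply_eq] using this
      · have := h2 i j hlt
        rw [hval] at this
        simpa [Matrix.add_apply, Matrix.one_apply, hlt.ne'] using this
    · intro i j hadj
      have := h3 i j hadj
      rw [hval] at this
      simpa [Matrix.add_apply, Matrix.one_apply, hadj.ne] using this
  · rintro ⟨k1, k2⟩
    simp only [Matrix.coe_units_inv] at k1 k2
    refine ⟨⟨fun i => ?_, fun i j hlt => ?_⟩, fun i j hadj => ?_⟩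
    · rw [hval]; simp [Matrix.add_apply, Matrix.one_apply_eq, k1 i i le_rfl]
    · rw [hval]; simp [Matrix.add_apply, Matrix.one_apply, hlt.ne', k1 i j hlt.le]
    · rw [hval]; simp [Matrix.add_apply, Matrix.one_apply, hadj.ne, k2 i j hadj]

end Aux


section Card

variable {n : ℕ} {F : Type*} [Field F] [Fintype F]

lemma card_B {B : Subgroup (Matrix (Fin n) (Fin n) F)ˣ}
    (hB : (B : Set (Matrix (Fin n) (Fin n) F)ˣ) =
      {g | ∀ i j : Fin n, j < i → g.val i j = 0}) :
    Nat.card B = (Fintype.card F - 1) ^ n *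
      Fintype.card F ^ Nat.card {p : Fin n × Fin n // p.1 < p.2} := by
  classical
  have memB : ∀ g : (Matrix (Fin n) (Fin n) F)ˣ,
      g ∈ B ↔ ∀ i j : Fin n, j < i → g.val i j = 0 := by
    intro g; rw [← SetLike.mem_coe, hB]; rfl
  set P := {p : Fin n × Fin n // p.1 < p.2} with hP
  let M : (Fin n → Fˣ) × (P → F) → Matrix (Fin n) (Fin n) F := fun du i j =>
    if h : i < j then du.2 ⟨(i, j), h⟩ else if i = j then (du.1 i : F) else 0
  have hMtri : ∀ du, (M du).BlockTriangular id := by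
    intro du i j hji
    replace hji : j < i := hji
    simp only [M]
    rw [dif_neg (asymm hji), if_neg (ne_of_gt hji)]
  have hMdiag : ∀ du i, M du i i = du.1 i := fun du i => by simp [M]
  have hMunit : ∀ du, IsUnit (M du) := by
    intro du
    rw [Matrix.isUnit_iff_isUnit_det, Matrix.det_of_upperTriangular (hMtri du)]
    simp only [hMdiag]
    simp only [← Units.coeHom_apply, ← map_prod]
    exact Units.isUnit _
  let f : (Fin n → Fˣ) × (P → F) → B := fun du =>
    ⟨(hMunit du).unit, by
      rw [memB]
      intro i j hji
      rw [IsUnit.unit_spec]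
      exact hMtri du hji⟩
  have hf : Function.Bijective f := by
    constructor
    · intro du du' h
      have hM : M du = M du' := by
        have := congrArg (fun x : B => ((x : (Matrix (Fin n) (Fin n) F)ˣ) :
          Matrix (Fin n) (Fin n) F)) h
        simpa [f, IsUnit.unit_spec] using this
      refine Prod.ext ?_ ?_
      · funext i
        apply Units.ext
        have := congrFun (congrFun hM i) i
        simpa [hMdiag] using this
      · funext p
        have := congrFun (congrFun hM p.1.1) p.1.2
        simpa [M, dif_pos p.2] using this
    · rintro ⟨g, hg⟩
      have hgtri : g.val.BlockTriangular id := fun i j hji => (memB g).mp hg i j hji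
      have hdet : IsUnit g.val.det := (Matrix.isUnit_iff_isUnit_det _).mp g.isUnit
      rw [Matrix.det_of_upperTriangular hgtri] at hdet
      have hne : ∀ i : Fin n, g.val i i ≠ 0 := fun i =>
        Finset.prod_ne_zero_iff.mp hdet.ne_zero i (Finset.mem_univ i)
      set du0 : (Fin n → Fˣ) × ({p : Fin n × Fin n // p.1 < p.2} → F) :=
        ⟨fun i => Units.mk0 _ (hne i), fun p => g.val p.1.1 p.1.2⟩ with hdu0
      have hMg : M du0 = g.val := by
        funext i j
        rcases lt_trichotomy i j with h | h | h
        · simp [M, hdu0, h]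
        · subst h; simp [M, hdu0]
        · simp only [M, dif_neg (asymm h), if_neg (ne_of_gt h)]
          exact ((memB g).mp hg i j h).symm
      exact ⟨du0, Subtype.ext (Units.ext hMg)⟩
  rw [← Nat.card_eq_of_bijective f hf, Nat.card_prod, Nat.card_fun, Nat.card_fun,
    Nat.card_eq_fintype_card (α := Fin n), Fintype.card_fin, Nat.card_units,
    Nat.card_eq_fintype_card (α := F)]

lemma card_H {γ : SimpleGraph (Fin n)} {H : Subgroup (Matrix (Fin n) (Fin n) F)ˣ}
    (hH : (H : Set (Matrix (Fin n) (Fin n) F)ˣ) = UTgSet n F γ) :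
    Nat.card H =
      Fintype.card F ^ Nat.card {p : Fin n × Fin n // p.1 < p.2 ∧ ¬γ.Adj p.1 p.2} := by
  classical
  have memH : ∀ g : (Matrix (Fin n) (Fin n) F)ˣ, g ∈ H ↔ g ∈ UTgSet n F γ := by
    intro g; rw [← SetLike.mem_coe, hH]
  set P := {p : Fin n × Fin n // p.1 < p.2 ∧ ¬γ.Adj p.1 p.2} with hP
  let M : (P → F) → Matrix (Fin n) (Fin n) F := fun u i j =>
    if h : i < j ∧ ¬γ.Adj i j then u ⟨(i, j), h⟩ else if i = j then 1 else 0
  have hMtri : ∀ u, (M u).BlockTriangular id := by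
    intro u i j hji
    replace hji : j < i := hji
    simp only [M]
    rw [dif_neg (fun hc => asymm hji hc.1), if_neg (ne_of_gt hji)]
  have hMdiag : ∀ u i, M u i i = 1 := fun u i => by simp [M]
  have hMunit : ∀ u, IsUnit (M u) := by
    intro u
    rw [Matrix.isUnit_iff_isUnit_det, Matrix.det_of_upperTriangular (hMtri u)]
    simp [hMdiag]
  have hMadj : ∀ u i j, γ.Adj i j → M u i j = 0 := by
    intro u i j hadj
    simp only [M]
    rw [dif_neg (fun hc => hc.2 hadj), if_neg hadj.ne]
  let f : (P → F) → H := fun u =>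
    ⟨(hMunit u).unit, by
      rw [memH]
      refine ⟨⟨fun i => ?_, fun i j hji => ?_⟩, fun i j hadj => ?_⟩
      · rw [IsUnit.unit_spec]; exact hMdiag u i
      · rw [IsUnit.unit_spec]; exact hMtri u hji
      · rw [IsUnit.unit_spec]; exact hMadj u i j hadj⟩
  have hf : Function.Bijective f := by
    constructor
    · intro u u' h
      have hM : M u = M u' := by
        have := congrArg (fun x : H => ((x : (Matrix (Fin n) (Fin n) F)ˣ) :
          Matrix (Fin n) (Fin n) F)) h
        simpa [f, IsUnit.unit_spec] using this
      funext p
      have := congrFun (congrFun hM p.1.1) p.1.2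
      simpa [M, dif_pos p.2] using this
    · rintro ⟨g, hg⟩
      obtain ⟨⟨h1, h2⟩, h3⟩ := (memH g).mp hg
      set u0 : {p : Fin n × Fin n // p.1 < p.2 ∧ ¬γ.Adj p.1 p.2} → F :=
        fun p => g.val p.1.1 p.1.2 with hu0
      have hMg : M u0 = g.val := by
        funext i j
        by_cases h : i < j ∧ ¬γ.Adj i j
        · simp [M, hu0, dif_pos h]
        · simp only [M, dif_neg h]
          rcases lt_trichotomy i j with hlt | he | hgt
          · have hadj : γ.Adj i j := by
              by_contra hc
              exact h ⟨hlt, hc⟩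
            rw [if_neg hadj.ne]
            exact (h3 i j hadj).symm
          · subst he; simp [(h1 i).symm]
          · rw [if_neg (ne_of_gt hgt)]
            exact (h2 i j hgt).symm
      exact ⟨u0, Subtype.ext (Units.ext hMg)⟩
  rw [← Nat.card_eq_of_bijective f hf, Nat.card_fun, Nat.card_eq_fintype_card (α := F)]

lemma card_edge_pairs (γ : SimpleGraph (Fin n)) :
    Nat.card {p : Fin n × Fin n // p.1 < p.2 ∧ γ.Adj p.1 p.2} = γ.edgeSet.ncard := by
  classical
  rw [← Nat.card_coe_set_eq]
  apply Nat.card_congr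
  refine Equiv.ofBijective (fun p => ⟨s(p.1.1, p.1.2), γ.mem_edgeSet.mpr p.2.2⟩) ⟨?_, ?_⟩
  · rintro ⟨⟨a, b⟩, ha, ha'⟩ ⟨⟨c, d⟩, hc, hc'⟩ h
    have h' : s(a, b) = s(c, d) := congrArg Subtype.val h
    rcases Sym2.eq_iff.mp h' with ⟨h1, h2⟩ | ⟨h1, h2⟩
    · subst h1; subst h2; rfl
    · subst h1; subst h2
      exact absurd (ha.trans hc) (lt_irrefl _)
  · rintro ⟨e, he⟩
    obtain ⟨⟨a, b⟩, rfl⟩ := e.exists_rep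
    have hadj : γ.Adj a b := γ.mem_edgeSet.mp he
    rcases lt_or_gt_of_ne hadj.ne with h | h
    · exact ⟨⟨(a, b), ⟨h, hadj⟩⟩, Subtype.ext rfl⟩
    · exact ⟨⟨(b, a), ⟨h, hadj.symm⟩⟩, Subtype.ext Sym2.eq_swap.symm⟩

lemma card_pairs_split (γ : SimpleGraph (Fin n)) :
    Nat.card {p : Fin n × Fin n // p.1 < p.2} =
      γ.edgeSet.ncard + Nat.card {p : Fin n × Fin n // p.1 < p.2 ∧ ¬γ.Adj p.1 p.2} := by
  classical
  rw [← card_edge_pairs γ, ← Nat.card_sum]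
  apply Nat.card_congr
  exact (Equiv.sumCompl (fun x : {p : Fin n × Fin n // p.1 < p.2} =>
      γ.Adj x.1.1 x.1.2)).symm.trans
    (Equiv.sumCongr
      (Equiv.subtypeSubtypeEquivSubtypeInter (fun p : Fin n × Fin n => p.1 < p.2)
        (fun p => γ.Adj p.1 p.2))
      (Equiv.subtypeSubtypeEquivSubtypeInter (fun p : Fin n × Fin n => p.1 < p.2)
        (fun p => ¬γ.Adj p.1 p.2)))

end Card


/-- For an indifference graph `γ` on `[n]` and `A` with `1 + A` invertible, the induced
character value `Ind_{UT_γ}^{GL_n}(1)(1+A) = #{g·UT_γ : g⁻¹(1+A)g ∈ UT_γ}` equals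
`(q-1)^n q^{|E(γ)|}` times the number of cosets `g·B_n` with `g⁻¹ A g ∈ ut_γ(𝔽_q)`. -/
theorem induced_character_value_eq (n : ℕ) (F : Type*) [Field F] [Fintype F]
    (γ : SimpleGraph (Fin n)) (hγ : IsIndiff γ)
    (A : Matrix (Fin n) (Fin n) F) (hA : IsUnit (1 + A))
    (H B : Subgroup (Matrix (Fin n) (Fin n) F)ˣ)
    (hH : (H : Set (Matrix (Fin n) (Fin n) F)ˣ) = UTgSet n F γ)
    (hB : (B : Set (Matrix (Fin n) (Fin n) F)ˣ) =
      {g | ∀ i j : Fin n, j < i → g.val i j = 0}) :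
    Nat.card {x : (Matrix (Fin n) (Fin n) F)ˣ ⧸ H |
        ∃ g : (Matrix (Fin n) (Fin n) F)ˣ, QuotientGroup.mk g = x ∧
          g⁻¹ * hA.unit * g ∈ H} =
      (Fintype.card F - 1) ^ n * Fintype.card F ^ γ.edgeSet.ncard *
        Nat.card {x : (Matrix (Fin n) (Fin n) F)ˣ ⧸ B |
          ∃ g : (Matrix (Fin n) (Fin n) F)ˣ, QuotientGroup.mk g = x ∧
            (g⁻¹).val * A * g.val ∈ utgSet n F γ} := by
  classical
  have hle : H ≤ B := by
    intro g hg
    rw [← SetLike.mem_coe, hH] at hg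
    rw [← SetLike.mem_coe, hB]
    exact fun i j hji => hg.1.2 i j hji
  have memBlow : ∀ g : (Matrix (Fin n) (Fin n) F)ˣ, g ∈ B →
      ∀ i j : Fin n, j < i → g.val i j = 0 := by
    intro g hg
    rw [← SetLike.mem_coe, hB] at hg
    exact hg
  have main : ∀ g g' : (Matrix (Fin n) (Fin n) F)ˣ, g⁻¹ * g' ∈ B →
      (g⁻¹).val * A * g.val ∈ utgSet n F γ →
      (g'⁻¹).val * A * g'.val ∈ utgSet n F γ := by
    intro g g' hb h
    set b := g⁻¹ * g' with hbdef
    have hg' : g' = g * b := by rw [hbdef]; group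
    have heq : (g'⁻¹).val * A * g'.val
        = (b⁻¹).val * ((g⁻¹).val * A * g.val) * b.val := by
      rw [hg']
      simp [mul_inv_rev, Units.val_mul, mul_assoc]
    rw [heq]
    exact utg_conj hγ (memBlow _ (B.inv_mem hb)) (memBlow _ hb) h
  let e := Subgroup.quotientEquivProdOfLE hle
  have he1 : ∀ g : (Matrix (Fin n) (Fin n) F)ˣ,
      (e (QuotientGroup.mk g)).1 = QuotientGroup.mk g := fun g => rfl
  have key : ∀ x : (Matrix (Fin n) (Fin n) F)ˣ ⧸ H,
      (∃ g : (Matrix (Fin n) (Fin n) F)ˣ, QuotientGroup.mk g = x ∧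
          g⁻¹ * hA.unit * g ∈ H) ↔
      (∃ g : (Matrix (Fin n) (Fin n) F)ˣ, QuotientGroup.mk g = (e x).1 ∧
          (g⁻¹).val * A * g.val ∈ utgSet n F γ) := by
    intro x
    refine QuotientGroup.induction_on x fun g0 => ?_
    rw [he1 g0]
    constructor
    · rintro ⟨g, hg1, hg2⟩
      refine ⟨g, ?_, (mem_H_iff hA hH g).mp hg2⟩
      exact (QuotientGroup.eq).mpr (hle ((QuotientGroup.eq).mp hg1))
    · rintro ⟨g, hg1, hg2⟩
      exact ⟨g0, rfl, (mem_H_iff hA hH g0).mpr (main g g0 ((QuotientGroup.eq).mp hg1) hg2)⟩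
  have hcard1 : Nat.card {x : (Matrix (Fin n) (Fin n) F)ˣ ⧸ H |
        ∃ g : (Matrix (Fin n) (Fin n) F)ˣ, QuotientGroup.mk g = x ∧
          g⁻¹ * hA.unit * g ∈ H} =
      Nat.card {x : (Matrix (Fin n) (Fin n) F)ˣ ⧸ B |
          ∃ g : (Matrix (Fin n) (Fin n) F)ˣ, QuotientGroup.mk g = x ∧
            (g⁻¹).val * A * g.val ∈ utgSet n F γ} *
        Nat.card (B ⧸ H.subgroupOf B) := by
    rw [← Nat.card_prod]
    exact Nat.card_congr ((Equiv.subtypeEquiv e key).trans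
      Equiv.prodSubtypeFstEquivSubtypeProd)
  have hQ : Nat.card H * Nat.card (B ⧸ H.subgroupOf B) = Nat.card B := by
    have h1 := Subgroup.card_mul_index (H.subgroupOf B)
    rwa [Subgroup.index_eq_card, Nat.card_congr (Subgroup.subgroupOfEquivOfLe hle).toEquiv] at h1
  have hqpos : 0 < Fintype.card F := Fintype.card_pos
  have hQ2 : Nat.card (B ⧸ H.subgroupOf B) =
      (Fintype.card F - 1) ^ n * Fintype.card F ^ γ.edgeSet.ncard := by
    have h2 := hQ
    rw [card_H hH, card_B hB, card_pairs_split γ, pow_add,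
      mul_comm (Fintype.card F ^ _) (Nat.card _), ← mul_assoc] at h2
    exact Nat.eq_of_mul_eq_mul_right (pow_pos hqpos _) h2
  rw [hcard1, hQ2]
  ring
end

section
/- For an indifference graph γ on [n], the set ut_γ(𝔽_q) = { A strictly upper triangular over 𝔽_q : A_{ij} = 0 for {i,j} ∈ E(γ) } is a two-sided ideal of the algebra of upper triangular n×n matrices over 𝔽_q, and is stable under conjugation by B_n(𝔽_q). -/
lemma utg_mul_aux (n : ℕ) (F : Type*) [Field F]
    (γ : SimpleGraph (Fin n)) (hγ : IsIndiff γ)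
    (T M : Matrix (Fin n) (Fin n) F) (hT : ∀ i j : Fin n, j < i → T i j = 0)
    (hM : M ∈ utgSet n F γ) : T * M ∈ utgSet n F γ ∧ M * T ∈ utgSet n F γ := by
  obtain ⟨hM1, hM2⟩ := hM
  constructor
  · constructor
    · intro i j hji
      rw [Matrix.mul_apply]
      refine Finset.sum_eq_zero fun k _ => ?_
      rcases lt_or_ge k i with h | h
      · rw [hT i k h, zero_mul]
      · rw [hM1 k j (hji.trans h), mul_zero]
    · intro i j hadj
      rw [Matrix.mul_apply]
      refine Finset.sum_eq_zero fun k _ => ?_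
      rcases lt_or_ge k i with h | h
      · rw [hT i k h, zero_mul]
      · rcases le_or_gt j k with h2 | h2
        · rw [hM1 k j h2, mul_zero]
        · have hij : i < j := lt_of_le_of_lt h h2
          rw [hM2 k j (hγ i j hij hadj k j h h2 le_rfl), mul_zero]
  · constructor
    · intro i j hji
      rw [Matrix.mul_apply]
      refine Finset.sum_eq_zero fun k _ => ?_
      rcases lt_or_ge j k with h | h
      · rw [hT k j h, mul_zero]
      · rw [hM1 i k (h.trans hji), zero_mul]
    · intro i j hadj
      rw [Matrix.mul_apply]
      refine Finset.sum_eq_zero fun k _ => ?_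
      rcases lt_or_ge j k with h | h
      · rw [hT k j h, mul_zero]
      · rcases le_or_gt k i with h2 | h2
        · rw [hM1 i k h2, zero_mul]
        · have hij : i < j := lt_of_lt_of_le h2 h
          rw [hM2 i k (hγ i j hij hadj i k le_rfl h2 h), zero_mul]

/-- For an indifference graph `γ`, `ut_γ(𝔽_q)` is a two-sided ideal of the algebra of
upper triangular matrices and is stable under conjugation by the Borel subgroup
`B_n(𝔽_q)` of invertible upper triangular matrices. -/
theorem utg_ideal_and_borel_stable (n : ℕ) (F : Type*) [Field F] [Fintype F]
    (γ : SimpleGraph (Fin n)) (hγ : IsIndiff γ) :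
    (0 ∈ utgSet n F γ) ∧
    (∀ M N, M ∈ utgSet n F γ → N ∈ utgSet n F γ → M + N ∈ utgSet n F γ) ∧
    (∀ M, M ∈ utgSet n F γ → -M ∈ utgSet n F γ) ∧
    (∀ T M : Matrix (Fin n) (Fin n) F, (∀ i j : Fin n, j < i → T i j = 0) →
      M ∈ utgSet n F γ → T * M ∈ utgSet n F γ ∧ M * T ∈ utgSet n F γ) ∧
    (∀ g : (Matrix (Fin n) (Fin n) F)ˣ, (∀ i j : Fin n, j < i → g.val i j = 0) →
      ∀ M ∈ utgSet n F γ, g.val * M * (g⁻¹).val ∈ utgSet n F γ) := by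
  refine ⟨⟨fun _ _ _ => rfl, fun _ _ _ => rfl⟩, ?_, ?_, ?_, ?_⟩
  · rintro M N ⟨hM1, hM2⟩ ⟨hN1, hN2⟩
    exact ⟨fun i j h => by simp [Matrix.add_apply, hM1 i j h, hN1 i j h],
      fun i j h => by simp [Matrix.add_apply, hM2 i j h, hN2 i j h]⟩
  · rintro M ⟨hM1, hM2⟩
    exact ⟨fun i j h => by simp [Matrix.neg_apply, hM1 i j h],
      fun i j h => by simp [Matrix.neg_apply, hM2 i j h]⟩
  · exact fun T M hT hM => utg_mul_aux n F γ hγ T M hT hM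
  · intro g hg M hM
    have hinv : ∀ i j : Fin n, j < i → (g⁻¹).val i j = 0 := by
      have hbt : (g.val).BlockTriangular id := fun i j h => hg i j h
      haveI : Invertible g.val := g.invertible
      have := Matrix.blockTriangular_inv_of_blockTriangular hbt
      intro i j h
      rw [Matrix.coe_units_inv, ← Matrix.invOf_eq_nonsing_inv, Matrix.invOf_eq_nonsing_inv] at *
      exact this h
    exact (utg_mul_aux n F γ hγ (g⁻¹).val (g.val * M) hinv
      (utg_mul_aux n F γ hγ g.val M hg hM).1).2
end

section
/- Let π be a Dyck path and Mesa(π) the tall Schröder path obtained by replacing each tall peak ES of π (a peak whose E step does not begin on the diagonal) by a diagonal step D. Then Area(π) = Area(Mesa(π)) ∪ Diag(Mesa(π)), and the only indifference graph γ with Diag(Mesa(π)) ⊆ E(γ) ⊆ Area(π) is γ = Graph(π) itself. -/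
/-!
Replacing a tall peak `ES` with apex `(j, i - 1)` by a `D` step removes exactly one lattice
point from the path, and the only cell of the area that this endangers is the cell `{i, j}`
under that apex, which the `D` step crosses; hence `Area(π) = Area(Mesa(π)) ∪ Diag(Mesa(π))`.

For the uniqueness, let `γ` be an indifference graph between `Diag(Mesa(π))` and `Area(π)`
and let `{i, j}` be a cell of `Area(π)`. If `{i, j + 1}` or `{i - 1, j}` is also in the area,
then by induction on `n - (j - i)` it is an edge of `γ`, hence so is `{i, j}` since `γ` is an
indifference graph. Otherwise `{i, j}` sits under a peak of `π`, which is tall because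
`i < j`, so `{i, j}` lies in `Diag(Mesa(π)) ⊆ E(γ)`.
-/

open scoped Classical

/-- A step of a Schröder path: east `E = (1,0)`, south `S = (0,-1)`, diagonal `D = (1,-1)`. -/
inductive Step : Type
  | E | S | D
  deriving DecidableEq

/-- Number of steps moving east (i.e. `E` or `D` steps). -/
def cntX (l : List Step) : ℕ := l.countP (fun s => decide (s ≠ Step.S))

/-- Number of steps moving south (i.e. `S` or `D` steps). -/
def cntY (l : List Step) : ℕ := l.countP (fun s => decide (s ≠ Step.E))

/-- A Schröder path of size `n`: a path from `(0,0)` to `(n,-n)` with steps `E`, `S`, `D`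
never going below the diagonal `y = -x`. -/
def IsSchroeder (n : ℕ) (σ : List Step) : Prop :=
  cntX σ = n ∧ cntY σ = n ∧ ∀ m, cntY (σ.take m) ≤ cntX (σ.take m)

/-- A tall Schröder path: a Schröder path none of whose `D` steps starts on the diagonal. -/
def IsTallSchroeder (n : ℕ) (σ : List Step) : Prop :=
  IsSchroeder n σ ∧ ∀ l₁ l₂ : List Step, σ = l₁ ++ Step.D :: l₂ → cntY l₁ < cntX l₁

/-- The unit square labelled `{i,j}` (one-based, `i < j`) lies completely below `σ`. -/
def AreaPred (σ : List Step) (i j : ℕ) : Prop :=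
  ∃ m, j ≤ cntX (σ.take m) ∧ cntY (σ.take m) < i

/-- The path `σ` has a diagonal step through the unit square labelled `{i,j}`. -/
def DiagPred (σ : List Step) (i j : ℕ) : Prop :=
  ∃ l₁ l₂ : List Step, σ = l₁ ++ Step.D :: l₂ ∧ cntX l₁ + 1 = j ∧ cntY l₁ + 1 = i

/-- `Area(σ)` as a set of edges on `Fin n` (vertex `v` has label `v + 1`). -/
noncomputable def AreaF (n : ℕ) (σ : List Step) : Finset (Sym2 (Fin n)) :=
  Finset.univ.filter fun e => ∃ i j : Fin n, e = s(i, j) ∧ (i : ℕ) < (j : ℕ) ∧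
    AreaPred σ ((i : ℕ) + 1) ((j : ℕ) + 1)

/-- `Diag(σ)` as a set of edges on `Fin n` (vertex `v` has label `v + 1`). -/
noncomputable def DiagF (n : ℕ) (σ : List Step) : Finset (Sym2 (Fin n)) :=
  Finset.univ.filter fun e => ∃ i j : Fin n, e = s(i, j) ∧ (i : ℕ) < (j : ℕ) ∧
    DiagPred σ ((i : ℕ) + 1) ((j : ℕ) + 1)

/-- The edge set of an indifference graph on `[n]`: loopless, and for every edge `{i,l}`
with `i < l`, every `{j,k}` with `i ≤ j < k ≤ l` is also an edge. -/
def IndiffEdges (n : ℕ) (E : Finset (Sym2 (Fin n))) : Prop :=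
  (∀ e ∈ E, ¬ e.IsDiag) ∧
  ∀ i l j k : Fin n, i < l → s(i, l) ∈ E → i ≤ j → j < k → k ≤ l → s(j, k) ∈ E

/-- `mesa h σ`: replace every tall peak `ES` of the path `σ` by a diagonal step `D`,
where `h` is the height `#E - #S` of the starting point above the diagonal (a peak is
tall precisely when its `E` step starts strictly above the diagonal, i.e. `0 < h`). -/
def mesa : ℕ → List Step → List Step
  | h, Step.E :: Step.S :: rest =>
      if 0 < h then Step.D :: mesa h rest else Step.E :: mesa (h + 1) (Step.S :: rest)
  | h, Step.E :: rest => Step.E :: mesa (h + 1) rest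
  | h, Step.S :: rest => Step.S :: mesa (h - 1) rest
  | h, Step.D :: rest => Step.D :: mesa h rest
  | _, [] => []
  termination_by _ l => l.length

@[simp] lemma cntX_nil : cntX [] = 0 := rfl
@[simp] lemma cntY_nil : cntY [] = 0 := rfl
@[simp] lemma cntX_cons_E (l : List Step) : cntX (Step.E :: l) = cntX l + 1 := by simp [cntX]
@[simp] lemma cntX_cons_S (l : List Step) : cntX (Step.S :: l) = cntX l := by simp [cntX]
@[simp] lemma cntX_cons_D (l : List Step) : cntX (Step.D :: l) = cntX l + 1 := by simp [cntX]
@[simp] lemma cntY_cons_E (l : List Step) : cntY (Step.E :: l) = cntY l := by simp [cntY]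
@[simp] lemma cntY_cons_S (l : List Step) : cntY (Step.S :: l) = cntY l + 1 := by simp [cntY]
@[simp] lemma cntY_cons_D (l : List Step) : cntY (Step.D :: l) = cntY l + 1 := by simp [cntY]
@[simp] lemma cntX_append (l₁ l₂ : List Step) : cntX (l₁ ++ l₂) = cntX l₁ + cntX l₂ := by
  simp [cntX, List.countP_append]
@[simp] lemma cntY_append (l₁ l₂ : List Step) : cntY (l₁ ++ l₂) = cntY l₁ + cntY l₂ := by
  simp [cntY, List.countP_append]

lemma cntX_take_le (l : List Step) (m : ℕ) : cntX (l.take m) ≤ cntX l :=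
  (List.take_sublist m l).countP_le

section AreaPred

variable {t : List Step} {i j : ℕ}

lemma areaPred_append {l₁ : List Step} (l₂ : List Step) (hj : j ≤ cntX l₁) (hi : cntY l₁ < i) :
    AreaPred (l₁ ++ l₂) i j :=
  ⟨l₁.length, by rwa [List.take_left], by rwa [List.take_left]⟩

lemma areaPred_cons_E (hj : 1 ≤ j) : AreaPred (Step.E :: t) i j ↔ AreaPred t i (j - 1) := by
  constructor
  · rintro ⟨_ | m, hx, hy⟩
    · simp at hx; omega
    · exact ⟨m, by simp at hx; omega, by simpa using hy⟩
  · rintro ⟨m, hx, hy⟩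
    exact ⟨m + 1, by simp; omega, by simpa using hy⟩

lemma areaPred_cons_S (hj : 1 ≤ j) : AreaPred (Step.S :: t) i j ↔ AreaPred t (i - 1) j := by
  constructor
  · rintro ⟨_ | m, hx, hy⟩
    · simp at hx; omega
    · exact ⟨m, by simpa using hx, by simp at hy; omega⟩
  · rintro ⟨m, hx, hy⟩
    exact ⟨m + 1, by simpa using hx, by simp; omega⟩

lemma exists_peak_of_areaPred_corner {l : List Step} (hD : Step.D ∉ l) (hj : 1 ≤ j)
    (hi : i ≤ cntY l) (hA : AreaPred l i j) (hright : ¬ AreaPred l i (j + 1))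
    (hup : ¬ AreaPred l (i - 1) j) :
    ∃ p₁ p₂, l = p₁ ++ Step.E :: Step.S :: p₂ ∧ cntX p₁ + 1 = j ∧ cntY p₁ + 1 = i := by
  induction l generalizing i j with
  | nil => obtain ⟨m, hx, -⟩ := hA; simp at hx; omega
  | cons a t ih =>
    have hDt : Step.D ∉ t := fun h => hD (List.mem_cons_of_mem _ h)
    cases a with
    | D => simp at hD
    | S =>
      rw [areaPred_cons_S hj] at hA hup
      rw [areaPred_cons_S (by omega)] at hright
      obtain ⟨p₁, p₂, rfl, hx, hy⟩ := ih hDt hj (by simp at hi; omega) hA hright hup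
      exact ⟨Step.S :: p₁, p₂, rfl, by simpa using hx, by simp; omega⟩
    | E =>
      rw [areaPred_cons_E hj] at hA hup
      rw [areaPred_cons_E (by omega), Nat.add_sub_cancel] at hright
      rcases Nat.lt_or_ge 1 j with hj2 | hj1
      · obtain ⟨p₁, p₂, rfl, hx, hy⟩ :=
          ih hDt (by omega) (by simpa using hi) hA (by rwa [Nat.sub_add_cancel hj]) hup
        exact ⟨Step.E :: p₁, p₂, rfl, by simp; omega, by simpa using hy⟩
      · obtain rfl : j = 1 := by omega
        have hi1 : i = 1 := by
          obtain ⟨m, -, hy⟩ := hA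
          by_contra
          exact hup ⟨0, by simp, by simp; omega⟩
        subst hi1
        rcases t with _ | ⟨_ | _ | _, t'⟩
        · simp at hi
        · exact absurd ⟨1, by simp, by simp⟩ hright
        · exact ⟨[], t', rfl, rfl, rfl⟩
        · simp at hDt

end AreaPred

lemma mem_DiagF_iff {n : ℕ} (σ : List Step) (i j : Fin n) (hij : (i : ℕ) < j) :
    s(i, j) ∈ DiagF n σ ↔ DiagPred σ (i + 1) (j + 1) := by
  simp only [DiagF, Finset.mem_filter, Finset.mem_univ, true_and]
  constructor
  · rintro ⟨i', j', heq, hij', hp⟩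
    rcases Sym2.eq_iff.mp heq with ⟨rfl, rfl⟩ | ⟨rfl, rfl⟩
    · exact hp
    · omega
  · exact fun hp => ⟨i, j, rfl, hij, hp⟩

section Mesa

lemma mesa_E_S (h : ℕ) (r : List Step) : mesa h (Step.E :: Step.S :: r) =
    if 0 < h then Step.D :: mesa h r else Step.E :: mesa (h + 1) (Step.S :: r) := by
  rw [mesa]

lemma mesa_E (h : ℕ) {r : List Step} (hr : ∀ r', r ≠ Step.S :: r') :
    mesa h (Step.E :: r) = Step.E :: mesa (h + 1) r :=
  mesa.eq_2 h r hr

lemma mesa_S (h : ℕ) (r : List Step) : mesa h (Step.S :: r) = Step.S :: mesa (h - 1) r := by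
  rw [mesa]

@[simp] lemma mesa_D (h : ℕ) (r : List Step) : mesa h (Step.D :: r) = Step.D :: mesa h r := by
  rw [mesa]

@[simp] lemma mesa_nil (h : ℕ) : mesa h [] = [] := by
  rw [mesa]

lemma cnt_mesa (h : ℕ) (l : List Step) :
    cntX (mesa h l) = cntX l ∧ cntY (mesa h l) = cntY l := by
  induction h, l using mesa.induct with
  | case1 h rest hpos ih => simp [mesa_E_S, hpos, ih]
  | case2 h rest hpos ih => simp only [mesa_E_S, if_neg hpos]; simp at ih ⊢; omega
  | case3 h rest hne ih => simp [mesa_E _ hne, ih]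
  | case4 h rest ih => simp [mesa_S, ih]
  | case5 h rest ih => simp [ih]
  | case6 h => simp

lemma exists_take_of_take_mesa (h : ℕ) (l : List Step) (m : ℕ) : ∃ m',
    cntX ((mesa h l).take m) = cntX (l.take m') ∧ cntY ((mesa h l).take m) = cntY (l.take m') := by
  induction h, l using mesa.induct generalizing m with
  | case1 h rest hpos ih =>
    rw [mesa_E_S, if_pos hpos]
    rcases m with _ | m
    · exact ⟨0, by simp⟩
    · obtain ⟨m', hx, hy⟩ := ih m
      exact ⟨m' + 2, by simp [hx, hy]⟩
  | case2 h rest hpos ih =>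
    rw [mesa_E_S, if_neg hpos]
    rcases m with _ | m
    · exact ⟨0, by simp⟩
    · obtain ⟨m', hx, hy⟩ := ih m
      exact ⟨m' + 1, by simp [hx, hy]⟩
  | case3 h rest hne ih =>
    rw [mesa_E _ hne]
    rcases m with _ | m
    · exact ⟨0, by simp⟩
    · obtain ⟨m', hx, hy⟩ := ih m
      exact ⟨m' + 1, by simp [hx, hy]⟩
  | case4 h rest ih | case5 h rest ih =>
    simp only [mesa_S, mesa_D]
    rcases m with _ | m
    · exact ⟨0, by simp⟩
    · obtain ⟨m', hx, hy⟩ := ih m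
      exact ⟨m' + 1, by simp [hx, hy]⟩
  | case6 h => exact ⟨0, by simp⟩

lemma tall_peak_of_mesa_eq_append_D {h : ℕ} {l : List Step} (hD : Step.D ∉ l)
    (hdyck : ∀ m, cntY (l.take m) ≤ h + cntX (l.take m)) {l₁ l₂ : List Step}
    (heq : mesa h l = l₁ ++ Step.D :: l₂) :
    cntY l₁ < h + cntX l₁ ∧
      ∃ p₁ p₂, l = p₁ ++ Step.E :: Step.S :: p₂ ∧ cntX p₁ = cntX l₁ ∧ cntY p₁ = cntY l₁ := by
  induction h, l using mesa.induct generalizing l₁ with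
  | case1 h rest hpos ih =>
    rw [mesa_E_S, if_pos hpos] at heq
    rcases l₁ with _ | ⟨a, l₁⟩
    · exact ⟨by simpa using hpos, [], rest, rfl, rfl, rfl⟩
    · simp only [List.cons_append, List.cons.injEq] at heq
      obtain ⟨rfl, heq⟩ := heq
      have hdyck' : ∀ m, cntY (rest.take m) ≤ h + cntX (rest.take m) := fun m => by
        have := hdyck (m + 2); simp at this; omega
      obtain ⟨htall, p₁, p₂, rfl, hx, hy⟩ := ih (by simp at hD; tauto) hdyck' heq
      exact ⟨by simp; omega, Step.E :: Step.S :: p₁, p₂, rfl, by simp [hx], by simp [hy]⟩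
  | case2 h rest hpos ih =>
    rw [mesa_E_S, if_neg hpos] at heq
    rcases l₁ with _ | ⟨a, l₁⟩
    · simp at heq
    · simp only [List.cons_append, List.cons.injEq] at heq
      obtain ⟨rfl, heq⟩ := heq
      have hdyck' : ∀ m, cntY ((Step.S :: rest).take m) ≤ h + 1 + cntX ((Step.S :: rest).take m) :=
        fun m => by
          have := hdyck (m + 1)
          simp only [List.take_succ_cons, cntX_cons_E, cntY_cons_E] at this; omega
      obtain ⟨htall, p₁, p₂, hp, hx, hy⟩ := ih (by simp at hD ⊢; tauto) hdyck' heq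
      exact ⟨by simp; omega, Step.E :: p₁, p₂, by simp [hp], by simp [hx], by simp [hy]⟩
  | case3 h rest hne ih =>
    rw [mesa_E _ hne] at heq
    rcases l₁ with _ | ⟨a, l₁⟩
    · simp at heq
    · simp only [List.cons_append, List.cons.injEq] at heq
      obtain ⟨rfl, heq⟩ := heq
      have hdyck' : ∀ m, cntY (rest.take m) ≤ h + 1 + cntX (rest.take m) := fun m => by
        have := hdyck (m + 1); simp at this; omega
      obtain ⟨htall, p₁, p₂, rfl, hx, hy⟩ := ih (by simp at hD; tauto) hdyck' heq
      exact ⟨by simp; omega, Step.E :: p₁, p₂, rfl, by simp [hx], by simp [hy]⟩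
  | case4 h rest ih =>
    rw [mesa_S] at heq
    rcases l₁ with _ | ⟨a, l₁⟩
    · simp at heq
    · simp only [List.cons_append, List.cons.injEq] at heq
      obtain ⟨rfl, heq⟩ := heq
      have hh : 1 ≤ h := by simpa using hdyck 1
      have hdyck' : ∀ m, cntY (rest.take m) ≤ h - 1 + cntX (rest.take m) := fun m => by
        have := hdyck (m + 1); simp at this; omega
      obtain ⟨htall, p₁, p₂, rfl, hx, hy⟩ := ih (by simp at hD; tauto) hdyck' heq
      exact ⟨by simp; omega, Step.S :: p₁, p₂, rfl, by simp [hx], by simp [hy]⟩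
  | case5 h rest ih => simp at hD
  | case6 h => simp at heq

lemma exists_take_mesa_of_take (h : ℕ) {l : List Step} (hD : Step.D ∉ l) (m : ℕ) :
    (∃ m', cntX ((mesa h l).take m') = cntX (l.take m) ∧
        cntY ((mesa h l).take m') = cntY (l.take m)) ∨
      ∃ l₁ l₂, mesa h l = l₁ ++ Step.D :: l₂ ∧
        cntX l₁ + 1 = cntX (l.take m) ∧ cntY l₁ = cntY (l.take m) := by
  induction h, l using mesa.induct generalizing m with
  | case1 h rest hpos ih =>
    rw [mesa_E_S, if_pos hpos]
    rcases m with _ | _ | m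
    · exact .inl ⟨0, by simp⟩
    · exact .inr ⟨[], mesa h rest, rfl, by simp, by simp⟩
    · rcases ih (by simp at hD; tauto) m with ⟨m', hx, hy⟩ | ⟨l₁, l₂, heq, hx, hy⟩
      · exact .inl ⟨m' + 1, by simp [hx, hy]⟩
      · exact .inr ⟨Step.D :: l₁, l₂, by simp [heq], by simp; omega, by simp; omega⟩
  | case2 h rest hpos ih =>
    rw [mesa_E_S, if_neg hpos]
    rcases m with _ | m
    · exact .inl ⟨0, by simp⟩
    · rcases ih (by simp at hD ⊢; tauto) m with ⟨m', hx, hy⟩ | ⟨l₁, l₂, heq, hx, hy⟩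
      · exact .inl ⟨m' + 1, by simp [hx, hy]⟩
      · exact .inr ⟨Step.E :: l₁, l₂, by simp [heq], by simp; omega, by simp; omega⟩
  | case3 h rest hne ih =>
    rw [mesa_E _ hne]
    rcases m with _ | m
    · exact .inl ⟨0, by simp⟩
    · rcases ih (by simp at hD; tauto) m with ⟨m', hx, hy⟩ | ⟨l₁, l₂, heq, hx, hy⟩
      · exact .inl ⟨m' + 1, by simp [hx, hy]⟩
      · exact .inr ⟨Step.E :: l₁, l₂, by simp [heq], by simp; omega, by simp; omega⟩
  | case4 h rest ih =>
    rw [mesa_S]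
    rcases m with _ | m
    · exact .inl ⟨0, by simp⟩
    · rcases ih (by simp at hD; tauto) m with ⟨m', hx, hy⟩ | ⟨l₁, l₂, heq, hx, hy⟩
      · exact .inl ⟨m' + 1, by simp [hx, hy]⟩
      · exact .inr ⟨Step.S :: l₁, l₂, by simp [heq], by simp; omega, by simp; omega⟩
  | case5 h rest ih => simp at hD
  | case6 h => exact .inl ⟨0, by simp⟩

lemma exists_mesa_eq_append_D_of_tall_peak {h : ℕ} {l p₁ p₂ : List Step} (hD : Step.D ∉ l)
    (hl : l = p₁ ++ Step.E :: Step.S :: p₂) (htall : cntY p₁ < h + cntX p₁) :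
    ∃ l₁ l₂, mesa h l = l₁ ++ Step.D :: l₂ ∧ cntX l₁ = cntX p₁ ∧ cntY l₁ = cntY p₁ := by
  induction h, l using mesa.induct generalizing p₁ with
  | case1 h rest hpos ih =>
    rw [mesa_E_S, if_pos hpos]
    rcases p₁ with _ | ⟨_, _ | ⟨_, q⟩⟩
    · exact ⟨[], mesa h rest, rfl, rfl, rfl⟩
    · simp at hl
    · simp only [List.cons_append, List.cons.injEq] at hl
      obtain ⟨rfl, rfl, hl⟩ := hl
      obtain ⟨l₁, l₂, heq, hx, hy⟩ := ih (by simp at hD; tauto) hl (by simp at htall; omega)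
      exact ⟨Step.D :: l₁, l₂, by simp [heq], by simp [hx], by simp [hy]⟩
  | case2 h rest hpos ih =>
    rw [mesa_E_S, if_neg hpos]
    rcases p₁ with _ | ⟨_, q⟩
    · simp at htall; omega
    · simp only [List.cons_append, List.cons.injEq] at hl
      obtain ⟨rfl, hl⟩ := hl
      obtain ⟨l₁, l₂, heq, hx, hy⟩ :=
        ih (by simp at hD ⊢; tauto) hl (by simp at htall; omega)
      exact ⟨Step.E :: l₁, l₂, by simp [heq], by simp [hx], by simp [hy]⟩
  | case3 h rest hne ih =>
    rw [mesa_E _ hne]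
    rcases p₁ with _ | ⟨_, q⟩
    · simp only [List.nil_append, List.cons.injEq, true_and] at hl
      exact (hne _ hl).elim
    · simp only [List.cons_append, List.cons.injEq] at hl
      obtain ⟨rfl, hl⟩ := hl
      obtain ⟨l₁, l₂, heq, hx, hy⟩ := ih (by simp at hD; tauto) hl (by simp at htall; omega)
      exact ⟨Step.E :: l₁, l₂, by simp [heq], by simp [hx], by simp [hy]⟩
  | case4 h rest ih =>
    rw [mesa_S]
    rcases p₁ with _ | ⟨_, q⟩
    · simp at hl
    · simp only [List.cons_append, List.cons.injEq] at hl
      obtain ⟨rfl, hl⟩ := hl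
      obtain ⟨l₁, l₂, heq, hx, hy⟩ := ih (by simp at hD; tauto) hl (by simp at htall; omega)
      exact ⟨Step.S :: l₁, l₂, by simp [heq], by simp [hx], by simp [hy]⟩
  | case5 h rest ih => simp at hD
  | case6 h => simp at hl

end Mesa

section Area

variable {l : List Step} {i j : ℕ}

lemma areaPred_of_areaPred_mesa (h : ℕ) (hA : AreaPred (mesa h l) i j) : AreaPred l i j := by
  obtain ⟨m, hx, hy⟩ := hA
  obtain ⟨m', hx', hy'⟩ := exists_take_of_take_mesa h l m
  exact ⟨m', hx' ▸ hx, hy' ▸ hy⟩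

lemma areaPred_of_diagPred_mesa {h : ℕ} (hD : Step.D ∉ l)
    (hdyck : ∀ m, cntY (l.take m) ≤ h + cntX (l.take m)) (hDiag : DiagPred (mesa h l) i j) :
    AreaPred l i j := by
  obtain ⟨l₁, l₂, heq, rfl, rfl⟩ := hDiag
  obtain ⟨-, p₁, p₂, rfl, hx, hy⟩ := tall_peak_of_mesa_eq_append_D hD hdyck heq
  rw [show p₁ ++ Step.E :: Step.S :: p₂ = (p₁ ++ [Step.E]) ++ Step.S :: p₂ by simp]
  exact areaPred_append _ (by simp; omega) (by simp; omega)

lemma areaPred_mesa_or_diagPred_mesa (h : ℕ) (hD : Step.D ∉ l) (hA : AreaPred l i j) :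
    AreaPred (mesa h l) i j ∨ DiagPred (mesa h l) i j := by
  obtain ⟨m, hx, hy⟩ := hA
  rcases exists_take_mesa_of_take h hD m with ⟨m', hx', hy'⟩ | ⟨l₁, l₂, heq, hx', hy'⟩
  · exact .inl ⟨m', hx' ▸ hx, hy' ▸ hy⟩
  · -- the apex of a replaced peak: use the endpoints of its `D` step unless `{i, j}` is under it
    rw [heq]
    rcases Nat.lt_or_ge (cntX l₁) j with hj | hj
    · rcases Nat.lt_or_ge (cntY l₁ + 1) i with hi | hi
      · rw [show l₁ ++ Step.D :: l₂ = (l₁ ++ [Step.D]) ++ l₂ by simp]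
        exact .inl (areaPred_append _ (by simp; omega) (by simp; omega))
      · exact .inr ⟨l₁, l₂, rfl, by omega, by omega⟩
    · exact .inl (areaPred_append _ hj (by omega))

lemma areaPred_iff_mesa {h : ℕ} (hD : Step.D ∉ l)
    (hdyck : ∀ m, cntY (l.take m) ≤ h + cntX (l.take m)) :
    AreaPred l i j ↔ AreaPred (mesa h l) i j ∨ DiagPred (mesa h l) i j :=
  ⟨areaPred_mesa_or_diagPred_mesa h hD,
    fun hA => hA.elim (areaPred_of_areaPred_mesa h) (areaPred_of_diagPred_mesa hD hdyck)⟩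

lemma diagPred_mesa_of_areaPred_corner (hD : Step.D ∉ l) (hi : i ≤ cntY l) (hij : i < j)
    (hA : AreaPred l i j) (hright : ¬ AreaPred l i (j + 1)) (hup : ¬ AreaPred l (i - 1) j) :
    DiagPred (mesa 0 l) i j := by
  obtain ⟨p₁, p₂, hl, hx, hy⟩ :=
    exists_peak_of_areaPred_corner hD (by omega) hi hA hright hup
  obtain ⟨l₁, l₂, heq, hx', hy'⟩ :=
    exists_mesa_eq_append_D_of_tall_peak (h := 0) hD hl (by omega)
  exact ⟨l₁, l₂, heq, by omega, by omega⟩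

end Area

lemma isTallSchroeder_mesa {n : ℕ} {π : List Step} (hπ : IsSchroeder n π) (hD : Step.D ∉ π) :
    IsTallSchroeder n (mesa 0 π) := by
  obtain ⟨hX, hY, hdyck⟩ := hπ
  refine ⟨⟨(cnt_mesa 0 π).1.trans hX, (cnt_mesa 0 π).2.trans hY, fun m => ?_⟩,
    fun l₁ l₂ heq => ?_⟩
  · obtain ⟨m', hx, hy⟩ := exists_take_of_take_mesa 0 π m
    exact hx ▸ hy ▸ hdyck m'
  · simpa using (tall_peak_of_mesa_eq_append_D hD (by simpa using hdyck) heq).1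

lemma areaF_eq_areaF_mesa_union_diagF_mesa (n : ℕ) {π : List Step} (hD : Step.D ∉ π)
    (hdyck : ∀ m, cntY (π.take m) ≤ cntX (π.take m)) :
    AreaF n π = AreaF n (mesa 0 π) ∪ DiagF n (mesa 0 π) := by
  ext e
  simp only [AreaF, DiagF, Finset.mem_union, Finset.mem_filter, Finset.mem_univ, true_and,
    areaPred_iff_mesa (h := 0) hD (by simpa using hdyck), and_or_left, exists_or]

lemma mem_of_areaPred {n : ℕ} {π : List Step} {E : Finset (Sym2 (Fin n))} (hD : Step.D ∉ π)
    (hX : cntX π = n) (hY : cntY π = n) (hE : IndiffEdges n E) (hdiag : DiagF n (mesa 0 π) ⊆ E)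
    (i j : Fin n) (hij : (i : ℕ) < j) (hA : AreaPred π (i + 1) (j + 1)) : s(i, j) ∈ E := by
  by_cases hright : AreaPred π (i + 1) (j + 1 + 1)
  · have hj : (j : ℕ) + 1 < n := by
      obtain ⟨m, hm, -⟩ := hright
      have := cntX_take_le π m
      omega
    have hwider := mem_of_areaPred hD hX hY hE hdiag i ⟨j + 1, hj⟩ (by simp; omega) hright
    exact hE.2 i ⟨j + 1, hj⟩ i j (by simp [Fin.lt_def]; omega) hwider le_rfl hij
      (by simp [Fin.le_def])
  by_cases hup : AreaPred π i (j + 1)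
  · have hi : 1 ≤ (i : ℕ) := by obtain ⟨m, -, hm⟩ := hup; omega
    have hwider := mem_of_areaPred hD hX hY hE hdiag ⟨i - 1, by omega⟩ j (by simp; omega)
      (by simpa [Nat.sub_add_cancel hi] using hup)
    exact hE.2 ⟨i - 1, by omega⟩ j i j (by simp [Fin.lt_def]; omega) hwider
      (by simp [Fin.le_def]) hij le_rfl
  exact hdiag ((mem_DiagF_iff _ i j hij).2 (diagPred_mesa_of_areaPred_corner hD
    (by omega) (by omega) hA hright (by simpa using hup)))
termination_by n - (j - i)

/-- For a Dyck path `π`, `Mesa(π)` is a tall Schröder path,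
`Area(π) = Area(Mesa(π)) ∪ Diag(Mesa(π))`, and the only indifference graph `γ` with
`Diag(Mesa(π)) ⊆ E(γ) ⊆ Area(π)` is `Graph(π)` itself. -/
theorem mesa_area_and_unique_indiff (n : ℕ) (π : List Step)
    (hπ : IsSchroeder n π ∧ Step.D ∉ π) :
    IsTallSchroeder n (mesa 0 π) ∧
    AreaF n π = AreaF n (mesa 0 π) ∪ DiagF n (mesa 0 π) ∧
    ∀ E : Finset (Sym2 (Fin n)), IndiffEdges n E →
      DiagF n (mesa 0 π) ⊆ E → E ⊆ AreaF n π → E = AreaF n π := by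
  obtain ⟨⟨hX, hY, hdyck⟩, hD⟩ := hπ
  refine ⟨isTallSchroeder_mesa ⟨hX, hY, hdyck⟩ hD, areaF_eq_areaF_mesa_union_diagF_mesa n hD hdyck,
    fun E hE hdiag hsub => hsub.antisymm fun e he => ?_⟩
  obtain ⟨i, j, rfl, hij, hA⟩ := (Finset.mem_filter.mp he).2
  exact mem_of_areaPred hD hX hY hE hdiag i j hij hA
end
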